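/- Let A = ⟨Q, Σ⟩ be a DFA such that the iteratively constructed graph Γ(A) is strongly connected and Γ(A) = Γ_k(A). Then A is completely reachable; more precisely, for every non-empty subset P ⊆ Q there is a word w that is a product of words of defect at most k (possibly the empty product) such that P = Q·w. -/

import Mathlib

/-!
Call `w` expanding for `P` if `Q·w` contains `P` and `w` merges two states into a state of `P`.
Then `P = (w⁻¹P)·w` with `|w⁻¹P| > |P|`, so climbing from `P` up to `Q` writes `P = Q·w₁⋯wₙ`.
An expanding word of defect at most `k` exists for every nonempty proper `P`: a path in `Γ_k(A)`
from a state outside `P` to one inside has an edge entering `P`. An edge of `E_j` entering `P`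
carries such a word; an inclusion edge entering `P` lands on the support of an SCC of an earlier
layer that meets both `P` and its complement, and we recurse into that layer.
-/

/-- The action of a word on a state: `q · w`. -/
def actWord {Q σ : Type*} (δ : Q → σ → Q) (w : List σ) (q : Q) : Q :=
  w.foldl δ q

/-- The image of a set of states under a word: `P · w`. -/
def actSet {Q σ : Type*} (δ : Q → σ → Q) (w : List σ) (P : Set Q) : Set Q :=
  actWord δ w '' P

/-- The set `excl(w) = Q \ Q·w` of excluded states of the word `w`. -/
def excl {Q σ : Type*} (δ : Q → σ → Q) (w : List σ) : Set Q :=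
  Set.univ \ actSet δ w Set.univ

/-- The defect of the word `w`, i.e. `|Q \ Q·w|`. -/
noncomputable def defect {Q σ : Type*} (δ : Q → σ → Q) (w : List σ) : ℕ :=
  (excl δ w).ncard

/-- The set `dupl(w)` of duplicate states of the word `w`. -/
def dupl {Q σ : Type*} (δ : Q → σ → Q) (w : List σ) : Set Q :=
  {p | ∃ q₁ q₂ : Q, q₁ ≠ q₂ ∧ actWord δ w q₁ = p ∧ actWord δ w q₂ = p}

/-- A subset `P ⊆ Q` is reachable if `P = Q·w` for some word `w`. -/
def reachableSubset {Q σ : Type*} (δ : Q → σ → Q) (P : Set Q) : Prop :=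
  ∃ w : List σ, actSet δ w Set.univ = P

/-- A DFA is completely reachable if every nonempty subset of states is reachable. -/
def completelyReachable {Q σ : Type*} (δ : Q → σ → Q) : Prop :=
  ∀ P : Set Q, P.Nonempty → reachableSubset δ P

/-- A directed graph given by a vertex set and an edge relation. -/
structure DGraph (V : Type*) where
  verts : Set V
  edge : V → V → Prop

/-- Reachability by a directed path in a graph. -/
def GReach {V : Type*} (G : DGraph V) : V → V → Prop :=
  Relation.ReflTransGen G.edge

/-- A graph is strongly connected if each of its vertices is reachable from
any other one. -/
def StronglyConnected {V : Type*} (G : DGraph V) : Prop :=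
  ∀ u ∈ G.verts, ∀ v ∈ G.verts, GReach G u v

/-- The strongly connected component of the vertex `v`: all vertices mutually
reachable with `v`. -/
def scc {V : Type*} (G : DGraph V) (v : V) : Set V :=
  {u | u ∈ G.verts ∧ GReach G u v ∧ GReach G v u}

/-- Vertices of the layered graphs: states (`Sum.inl`) and subsets of states
(`Sum.inr`). -/
abbrev Vtx (Q : Type*) := Q ⊕ Set Q

/-- The support of a set of vertices: the states belonging to it. -/
def support {Q : Type*} (S : Set (Vtx Q)) : Set Q :=
  {q | Sum.inl q ∈ S}

/-- The graph `Γ₁(A)`: vertices are the states, and there is an edge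
`(excl w, dupl w)` for each word `w` of defect 1. -/
def Gamma1 {Q σ : Type*} (δ : Q → σ → Q) : DGraph (Vtx Q) where
  verts := Set.range Sum.inl
  edge := fun u v => ∃ q p : Q, u = Sum.inl q ∧ v = Sum.inl p ∧
    ∃ w : List σ, defect δ w = 1 ∧ excl δ w = {q} ∧ p ∈ dupl δ w

/-- `Qnext G k`: the collection of the supports of all SCCs of `G` of rank
at least `k` (this is the set `Q_k` when `G = Γ_{k-1}(A)`). -/
def Qnext {Q : Type*} (G : DGraph (Vtx Q)) (k : ℕ) : Set (Set Q) :=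
  {C | ∃ v ∈ G.verts, C = support (scc G v) ∧ k ≤ C.ncard}

/-- One step of the iterative construction: from `G = Γ_{k-1}(A)` build
`Γ_k(A)` by adding the new vertices `Q_k`, the inclusion edges `I_k`, and the
edges `E_k` enforced by words of defect `k`. -/
def step {Q σ : Type*} (δ : Q → σ → Q) (G : DGraph (Vtx Q)) (k : ℕ) :
    DGraph (Vtx Q) where
  verts := G.verts ∪ Sum.inr '' Qnext G k
  edge := fun u v =>
    G.edge u v ∨
    (∃ C ∈ Qnext G k, v = Sum.inr C ∧
      ((∃ q : Q, u = Sum.inl q ∧ q ∈ C) ∨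
       (∃ D : Set Q, u = Sum.inr D ∧ Sum.inr D ∈ G.verts ∧ D ⊂ C))) ∨
    (∃ C ∈ Qnext G k, ∃ p : Q, u = Sum.inr C ∧ v = Sum.inl p ∧
      ∃ w : List σ, defect δ w = k ∧ excl δ w ⊆ C ∧ p ∈ dupl δ w)

/-- The layered graphs `Γ_k(A)` (with `Γ_0 := Γ_1`). -/
def Gamma {Q σ : Type*} (δ : Q → σ → Q) : ℕ → DGraph (Vtx Q)
  | 0 => Gamma1 δ
  | 1 => Gamma1 δ
  | (k + 2) => step δ (Gamma δ (k + 1)) (k + 2)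

/-- The FAILURE condition at step `k`: every SCC of `Γ_k(A)` has rank at
most `k`. -/
def failsAt {Q σ : Type*} (δ : Q → σ → Q) (k : ℕ) : Prop :=
  ∀ v ∈ (Gamma δ k).verts, (support (scc (Gamma δ k) v)).ncard ≤ k

/-- The iterative construction stops at step `k` (so `Γ(A) = Γ_k(A)`):
`k` is the first index at which `Γ_k(A)` is strongly connected (SUCCESS) or
every SCC of `Γ_k(A)` has rank at most `k` (FAILURE). -/
def stopsAt {Q σ : Type*} (δ : Q → σ → Q) (k : ℕ) : Prop :=
  1 ≤ k ∧ (StronglyConnected (Gamma δ k) ∨ failsAt δ k) ∧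
    ∀ j, 1 ≤ j → j < k → ¬ StronglyConnected (Gamma δ j) ∧ ¬ failsAt δ j

section Words

variable {Q σ : Type*} (δ : Q → σ → Q)

lemma actSet_nil (P : Set Q) : actSet δ [] P = P :=
  Set.image_id P

lemma actWord_append (a b : List σ) (q : Q) :
    actWord δ (a ++ b) q = actWord δ b (actWord δ a q) :=
  List.foldl_append

lemma actSet_append (a b : List σ) (P : Set Q) :
    actSet δ (a ++ b) P = actSet δ b (actSet δ a P) := by
  simp only [actSet, Set.image_image, actWord_append]

/-- `w` maps the strictly larger set `w⁻¹ P` onto `P`. -/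
def Expands (w : List σ) (P : Set Q) : Prop :=
  Disjoint (excl δ w) P ∧ (dupl δ w ∩ P).Nonempty

variable {δ}

lemma Expands.subset_range {w : List σ} {P : Set Q} (h : Expands δ w P) :
    P ⊆ Set.range (actWord δ w) := by
  intro p hp
  by_contra hpw
  exact Set.disjoint_left.mp h.1 ⟨trivial, by simpa [actSet] using hpw⟩ hp

lemma Expands.actSet_preimage {w : List σ} {P : Set Q} (h : Expands δ w P) :
    actSet δ w (actWord δ w ⁻¹' P) = P :=
  Set.image_preimage_eq_of_subset h.subset_range

lemma ncard_lt_ncard_preimage {α β : Type*} [Finite α] {f : α → β} {P : Set β}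
    (hP : P ⊆ Set.range f) {q₁ q₂ : α} (hne : q₁ ≠ q₂) (hq : f q₁ = f q₂) (hP₁ : f q₁ ∈ P) :
    P.ncard < (f ⁻¹' P).ncard := by
  calc P.ncard = (f '' (f ⁻¹' P)).ncard := by rw [Set.image_preimage_eq_of_subset hP]
    _ < (f ⁻¹' P).ncard := (Set.ncard_image_le (f := f)).lt_of_ne fun heq =>
      hne (Set.injOn_of_ncard_image_eq heq (Set.toFinite _) hP₁ (show f q₂ ∈ P from hq ▸ hP₁) hq)

lemma Expands.ncard_lt_ncard_preimage [Finite Q] {w : List σ} {P : Set Q}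
    (h : Expands δ w P) : P.ncard < (actWord δ w ⁻¹' P).ncard := by
  obtain ⟨_, ⟨q₁, q₂, hne, rfl, hq⟩, hp⟩ := h.2
  exact _root_.ncard_lt_ncard_preimage h.subset_range hne hq.symm hp

theorem exists_flatten_actSet_univ_eq [Finite Q] (good : List σ → Prop)
    (hexp : ∀ P : Set Q, P.Nonempty → P ≠ Set.univ → ∃ w, good w ∧ Expands δ w P)
    (P : Set Q) (hP : P.Nonempty) :
    ∃ ws : List (List σ), (∀ u ∈ ws, good u) ∧ actSet δ ws.flatten Set.univ = P := by
  induction hn : Nat.card Q - P.ncard using Nat.strong_induction_on generalizing P with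
  | _ n ih =>
    by_cases hPu : P = Set.univ
    · exact ⟨[], by simp, by rw [hPu, List.flatten_nil, actSet_nil]⟩
    obtain ⟨w, hw, hwP⟩ := hexp P hP hPu
    have hlt := hwP.ncard_lt_ncard_preimage
    have hle := Set.ncard_le_card (actWord δ w ⁻¹' P)
    obtain ⟨ws, hws, hwsP⟩ :=
      ih _ (by omega) (actWord δ w ⁻¹' P) (hP.preimage' hwP.subset_range) rfl
    refine ⟨ws ++ [w], ?_, ?_⟩
    · simpa [or_imp, forall_and] using ⟨hws, hw⟩
    · rw [List.flatten_append, List.flatten_singleton, actSet_append, hwsP, hwP.actSet_preimage]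

end Words

lemma Relation.ReflTransGen.exists_edge_of_not_of {α : Type*} {r : α → α → Prop}
    {p : α → Prop} {a b : α} (hab : Relation.ReflTransGen r a b) (ha : ¬ p a) (hb : p b) :
    ∃ x y, r x y ∧ ¬ p x ∧ p y := by
  induction hab with
  | refl => exact absurd hb ha
  | @tail x y _ hxy ih =>
    by_cases hx : p x
    exacts [ih hx, ⟨x, y, hxy, hx, hb⟩]

lemma GReach.inl_of_mem_support_scc {Q : Type*} {G : DGraph (Vtx Q)} {v : Vtx Q} {a b : Q}
    (ha : a ∈ support (scc G v)) (hb : b ∈ support (scc G v)) :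
    GReach G (Sum.inl a) (Sum.inl b) :=
  ha.2.1.trans hb.2.2

section Layers

variable {Q σ : Type*} (δ : Q → σ → Q)

lemma inl_mem_Gamma_verts : ∀ (m : ℕ) (q : Q), Sum.inl q ∈ (Gamma δ m).verts
  | 0, q | 1, q => ⟨q, rfl⟩
  | m + 2, q => Or.inl (inl_mem_Gamma_verts (m + 1) q)

lemma nonempty_of_inr_mem_Gamma_verts : ∀ (m : ℕ) (D : Set Q),
    Sum.inr D ∈ (Gamma δ m).verts → D.Nonempty
  | 0, _, ⟨_, h⟩ | 1, _, ⟨_, h⟩ => Sum.inl_ne_inr h |>.elim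
  | m + 2, D, h => by
    rcases h with h | ⟨D', ⟨_, _, _, hcard⟩, hD'⟩
    · exact nonempty_of_inr_mem_Gamma_verts (m + 1) D h
    · obtain rfl := Sum.inr_injective hD'
      exact Set.nonempty_of_ncard_ne_zero (by omega)

def meets (P : Set Q) : Vtx Q → Prop
  | Sum.inl q => q ∈ P
  | Sum.inr C => (C ∩ P).Nonempty

/-- The second alternative comes from an inclusion edge into the support of an SCC of
`Γ_{m-1}(A)`. -/
lemma Gamma_edge_into (P : Set Q) : ∀ m, 1 ≤ m → ∀ u v, (Gamma δ m).edge u v →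
    ¬ meets P u → meets P v →
    (∃ w, defect δ w ≤ m ∧ Expands δ w P) ∨
      ∃ j, 1 ≤ j ∧ j < m ∧ ∃ q ∉ P, ∃ p ∈ P, GReach (Gamma δ j) (Sum.inl q) (Sum.inl p)
  | 1, _, _, _, ⟨q, p, rfl, rfl, w, hw, hwq, hwp⟩, hu, hv =>
    Or.inl ⟨w, hw.le, by rwa [hwq, Set.disjoint_singleton_left], p, hwp, hv⟩
  | m + 2, _, u, v, h, hu, hv => by
    rcases h with h | ⟨C, ⟨c, -, rfl, -⟩, rfl, hin⟩ | ⟨C, -, p, rfl, rfl, w, hw, hwC, hwp⟩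
    · rcases Gamma_edge_into P (m + 1) (by omega) u v h hu hv with ⟨w, hw, hwP⟩ | ⟨j, hj⟩
      · exact Or.inl ⟨w, by omega, hwP⟩
      · exact Or.inr ⟨j, hj.1, by omega, hj.2.2⟩
    · obtain ⟨p, hpC, hp⟩ := hv
      obtain ⟨q, hqC, hq⟩ : ∃ q ∈ support (scc (Gamma δ (m + 1)) c), q ∉ P := by
        rcases hin with ⟨q, rfl, hqC⟩ | ⟨D, rfl, hD, hDC⟩
        · exact ⟨q, hqC, hu⟩
        · obtain ⟨d, hd⟩ := nonempty_of_inr_mem_Gamma_verts δ (m + 1) D hD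
          exact ⟨d, hDC.1 hd, fun hdP => hu ⟨d, hd, hdP⟩⟩
      exact Or.inr ⟨m + 1, by omega, by omega, q, hq, p, hp, .inl_of_mem_support_scc hqC hpC⟩
    · refine Or.inl ⟨w, hw.le, ?_, p, hwp, hv⟩
      exact Set.disjoint_of_subset_left hwC (Set.disjoint_iff_inter_eq_empty.mpr
        (Set.not_nonempty_iff_eq_empty.mp hu))

theorem exists_expands_of_gReach (P : Set Q) (m : ℕ) (hm : 1 ≤ m) {u v : Vtx Q}
    (huv : GReach (Gamma δ m) u v) (hu : ¬ meets P u) (hv : meets P v) :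
    ∃ w, defect δ w ≤ m ∧ Expands δ w P := by
  induction m using Nat.strong_induction_on generalizing u v with
  | _ m ih =>
    obtain ⟨x, y, hxy, hx, hy⟩ := huv.exists_edge_of_not_of hu hv
    rcases Gamma_edge_into δ P m hm x y hxy hx hy with h | ⟨j, hj, hjm, q, hq, p, hp, hqp⟩
    · exact h
    · obtain ⟨w, hw, hwP⟩ := ih j hjm hj hqp hq hp
      exact ⟨w, by omega, hwP⟩

end Layers

/-- Theorem 3: if the construction stops at step `k` (i.e.
`Γ(A) = Γ_k(A)`) and `Γ(A)` is strongly connected, then `A` is completely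
reachable; more precisely, every non-empty subset `P ⊆ Q` satisfies `P = Q·w`
for some product `w` of words of defect at most `k`. -/
theorem gamma_strongly_connected_completely_reachable
    {Q σ : Type*} [Fintype Q] (δ : Q → σ → Q) (k : ℕ)
    (hstop : stopsAt δ k) (hsc : StronglyConnected (Gamma δ k)) :
    completelyReachable δ ∧
      ∀ P : Set Q, P.Nonempty →
        ∃ ws : List (List σ), (∀ u ∈ ws, defect δ u ≤ k) ∧
          actSet δ ws.flatten Set.univ = P := by
  have hexp : ∀ P : Set Q, P.Nonempty → P ≠ Set.univ →
      ∃ w, defect δ w ≤ k ∧ Expands δ w P := by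
    intro P ⟨p, hp⟩ hP
    obtain ⟨q, hq⟩ := (Set.ne_univ_iff_exists_notMem P).mp hP
    exact exists_expands_of_gReach δ P k hstop.1
      (hsc _ (inl_mem_Gamma_verts δ k q) _ (inl_mem_Gamma_verts δ k p)) hq hp
  have hwords := exists_flatten_actSet_univ_eq (fun w => defect δ w ≤ k) hexp
  refine ⟨fun P hP => ?_, hwords⟩
  obtain ⟨ws, -, hws⟩ := hwords P hP
  exact ⟨ws.flatten, hws⟩
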